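/- (Proposition 2, convergence of the iterates.) Under (A1) and (A2), the sequence u_0 := ψ_2, u_n := T u_{n−1} (n ≥ 1) converges pointwise to a function u*(i) := lim_{n→∞} u_n(i), and u* ∈ B_W(S) with ψ_2(i) ≤ u*(i) ≤ ψ_1(i) for all i ∈ S and ‖u*‖_W ≤ M. -/

import Mathlib

open MeasureTheory Filter Topology

noncomputable section

variable {U V : Type}

/-- Integrated reward rate `r̃(i,μ,ν)`. -/
def rT [MeasurableSpace U] [MeasurableSpace V] (r : ℕ → U → V → ℝ) (i : ℕ)
    (μ : ProbabilityMeasure U) (ν : ProbabilityMeasure V) : ℝ :=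
  ∫ b, (∫ a, r i a b ∂(μ : Measure U)) ∂(ν : Measure V)

/-- Integrated transition rate `q̃(j|i,μ,ν)`. -/
def qT [MeasurableSpace U] [MeasurableSpace V] (q : ℕ → ℕ → U → V → ℝ) (i j : ℕ)
    (μ : ProbabilityMeasure U) (ν : ProbabilityMeasure V) : ℝ :=
  ∫ b, (∫ a, q i j a b ∂(μ : Measure U)) ∂(ν : Measure V)

/-- `p̃(j|i,μ,ν) = q̃(j|i,μ,ν)/(q(i)+1) + δ_{ij}`. -/
def pT [MeasurableSpace U] [MeasurableSpace V] (q : ℕ → ℕ → U → V → ℝ) (qb : ℕ → ℝ)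
    (i j : ℕ) (μ : ProbabilityMeasure U) (ν : ProbabilityMeasure V) : ℝ :=
  qT q i j μ ν / (qb i + 1) + (if i = j then (1 : ℝ) else 0)

/-- `H_α(i,φ)`. -/
def Hop [MeasurableSpace U] [MeasurableSpace V] (q : ℕ → ℕ → U → V → ℝ)
    (r : ℕ → U → V → ℝ) (φ : ℕ → ℝ) (i : ℕ) : ℝ :=
  ⨅ μ : ProbabilityMeasure U, ⨆ ν : ProbabilityMeasure V,
    (rT r i μ ν + ∑' j, qT q i j μ ν * φ j)

/-- `I_α(i,φ)`. -/
def Iop [MeasurableSpace U] [MeasurableSpace V] (q : ℕ → ℕ → U → V → ℝ)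
    (r : ℕ → U → V → ℝ) (qb : ℕ → ℝ) (α : ℝ) (φ : ℕ → ℝ) (i : ℕ) : ℝ :=
  ⨅ μ : ProbabilityMeasure U, ⨆ ν : ProbabilityMeasure V,
    (rT r i μ ν / (α + qb i + 1) +
      ((qb i + 1) / (α + qb i + 1)) * ∑' j, pT q qb i j μ ν * φ j)

/-- The operator `T`. -/
def Tmap [MeasurableSpace U] [MeasurableSpace V] (q : ℕ → ℕ → U → V → ℝ)
    (r : ℕ → U → V → ℝ) (qb : ℕ → ℝ) (α : ℝ) (ψ₁ ψ₂ : ℕ → ℝ)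
    (φ : ℕ → ℝ) (i : ℕ) : ℝ :=
  min (max (Iop q r qb α φ i) (ψ₂ i)) (ψ₁ i)

/-- The space `B_W(S)` of nonnegative functions with finite weighted sup-norm. -/
def BW (W : ℕ → ℝ) : Set (ℕ → ℝ) :=
  {f | (∀ i, 0 ≤ f i) ∧ BddAbove (Set.range fun i => f i / W i)}

/-- The weighted sup-norm `‖f‖_W`. -/
def normW (W : ℕ → ℝ) (f : ℕ → ℝ) : ℝ := ⨆ i, f i / W i

/-- Basic properties of the transition rates: nonnegativity off the diagonal,
conservativeness and stability (`qb i` is the least upper bound `q(i)`). -/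
structure RateHyps (q : ℕ → ℕ → U → V → ℝ) (qb : ℕ → ℝ) : Prop where
  off_nonneg : ∀ i j a b, j ≠ i → 0 ≤ q i j a b
  summable : ∀ i a b, Summable fun j => q i j a b
  conservative : ∀ i a b, ∑' j, q i j a b = 0
  stable : ∀ i, IsLUB (Set.range fun ab : U × V =>
    ∑' j, if j = i then (0 : ℝ) else q i j ab.1 ab.2) (qb i)

/-- Assumption (A1) (with `w 0, …, w (N-1)` playing the role of `w_1, …, w_N`,
and `W = w_1 + ⋯ + w_N`). -/
structure A1Hyps (q : ℕ → ℕ → U → V → ℝ) (qb : ℕ → ℝ) (N : ℕ) (w : ℕ → ℕ → ℝ)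
    (c : ℝ) (W : ℕ → ℝ) : Prop where
  N_pos : 0 < N
  c_pos : 0 < c
  w_nonneg : ∀ n i, 0 ≤ w n i
  w_summable : ∀ n, n < N → ∀ i a b, Summable fun j => q i j a b * w n j
  w_rec : ∀ n, n + 1 < N → ∀ i a b, ∑' j, q i j a b * w n j ≤ w (n + 1) i
  w_last : ∀ i a b, ∑' j, q i j a b * w (N - 1) j ≤ 0
  qb_le : ∀ i, qb i ≤ c * W i
  W_def : ∀ i, W i = ∑ n ∈ Finset.range N, w n i
  W_pos : ∀ i, 0 < W i

/-- Assumption (A2), parts (ii)-(iv) concerning `r` and `q`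
(compactness of `U` and `V` is imposed through instance arguments). -/
structure A2Hyps [TopologicalSpace U] [TopologicalSpace V] (q : ℕ → ℕ → U → V → ℝ)
    (r : ℕ → U → V → ℝ) (W : ℕ → ℝ) (M : ℝ) : Prop where
  r_nonneg : ∀ i a b, 0 ≤ r i a b
  r_cont : ∀ i, Continuous fun ab : U × V => r i ab.1 ab.2
  q_cont : ∀ i j, Continuous fun ab : U × V => q i j ab.1 ab.2
  qW_cont : ∀ i, Continuous fun ab : U × V => ∑' j, q i j ab.1 ab.2 * W j
  r_le : ∀ i a b, r i a b ≤ M * W i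

/-- Assumption (A2), part (iv) concerning the stopped pay-off functions. -/
structure PsiHyps (ψ₁ ψ₂ : ℕ → ℝ) (W : ℕ → ℝ) (M : ℝ) : Prop where
  ψ₂_nonneg : ∀ i, 0 ≤ ψ₂ i
  ψ₁_le : ∀ i, ψ₁ i ≤ M * W i
  ψ₂_lt_ψ₁ : ∀ i, ψ₂ i < ψ₁ i

end


/-!
The operator `T` is monotone on the order interval `0 ≤ φ ≤ M W`: the uniformized kernel `p̃` is
nonnegative, and the drift condition (A1) bounds `∑ p̃(j|i) W(j)` by `2 W(i)` uniformly in the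
mixed strategies, so all series converge and the inf-sup in `I_α` is taken over bounded families.
Since `T` maps everything into `[ψ₂, ψ₁]` and `u₀ = ψ₂ ≤ T ψ₂`, the iterates increase and stay
below `ψ₁ ≤ M W`; monotone convergence gives the limit `u*`, which stays in `[ψ₂, ψ₁]`.
-/

theorem Continuous.integrable_of_compactSpace {X : Type*} [TopologicalSpace X] [CompactSpace X]
    [MeasurableSpace X] [OpensMeasurableSpace X] {ρ : Measure X} [IsFiniteMeasure ρ]
    {f : X → ℝ} (hf : Continuous f) : Integrable f ρ :=
  hf.integrable_of_hasCompactSupport (.of_compactSpace f)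

section IteratedIntegral

variable {U V : Type*} [TopologicalSpace U] [CompactSpace U] [MeasurableSpace U]
  [OpensMeasurableSpace U] [TopologicalSpace V] [CompactSpace V]

theorem continuous_integral_of_continuous_uncurry [FirstCountableTopology V]
    (μ : Measure U) [IsFiniteMeasure μ] {f : U → V → ℝ} (hf : Continuous (Function.uncurry f)) :
    Continuous fun b => ∫ a, f a b ∂μ := by
  obtain ⟨C, hC⟩ := (isCompact_range hf).isBounded.exists_norm_le
  exact continuous_of_dominated
    (fun b => (hf.comp (.prodMk_left b)).aestronglyMeasurable)
    (fun b => .of_forall fun a => hC _ ⟨(a, b), rfl⟩) (integrable_const C)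
    (.of_forall fun a => hf.comp (.prodMk_right a))

variable [FirstCountableTopology V] [MeasurableSpace V] [OpensMeasurableSpace V]
  (μ : Measure U) [IsProbabilityMeasure μ] (ν : Measure V) [IsProbabilityMeasure ν]

theorem integral_integral_mono {f g : U → V → ℝ} (hf : Continuous (Function.uncurry f))
    (hg : Continuous (Function.uncurry g)) (h : ∀ a b, f a b ≤ g a b) :
    ∫ b, ∫ a, f a b ∂μ ∂ν ≤ ∫ b, ∫ a, g a b ∂μ ∂ν :=
  integral_mono (continuous_integral_of_continuous_uncurry μ hf).integrable_of_compactSpace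
    (continuous_integral_of_continuous_uncurry μ hg).integrable_of_compactSpace fun b =>
      integral_mono (hf.comp (.prodMk_left b)).integrable_of_compactSpace
        (hg.comp (.prodMk_left b)).integrable_of_compactSpace fun a => h a b

theorem integral_integral_le_of_le {f : U → V → ℝ} (hf : Continuous (Function.uncurry f))
    {C : ℝ} (h : ∀ a b, f a b ≤ C) : ∫ b, ∫ a, f a b ∂μ ∂ν ≤ C := by
  simpa using integral_integral_mono μ ν hf continuous_const h

theorem le_integral_integral_of_le {f : U → V → ℝ} (hf : Continuous (Function.uncurry f))
    {C : ℝ} (h : ∀ a b, C ≤ f a b) : C ≤ ∫ b, ∫ a, f a b ∂μ ∂ν := by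
  simpa using integral_integral_mono μ ν continuous_const hf h

theorem sum_integral_integral_le {ι : Type*} (s : Finset ι) {f : ι → U → V → ℝ}
    (hf : ∀ j, Continuous (Function.uncurry (f j))) {C : ℝ} (h : ∀ a b, ∑ j ∈ s, f j a b ≤ C) :
    ∑ j ∈ s, ∫ b, ∫ a, f j a b ∂μ ∂ν ≤ C := by
  have hsum : Continuous (Function.uncurry fun a b => ∑ j ∈ s, f j a b) := by
    simpa only [Function.uncurry_def] using continuous_finsetSum s fun j _ => hf j
  refine le_of_eq_of_le ?_ (integral_integral_le_of_le μ ν hsum h)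
  rw [← integral_finsetSum s fun j _ =>
    (continuous_integral_of_continuous_uncurry μ (hf j)).integrable_of_compactSpace]
  congr 1 with b
  exact (integral_finsetSum s fun j _ =>
    ((hf j).comp (.prodMk_left b)).integrable_of_compactSpace).symm

end IteratedIntegral

section Rates

variable {U V : Type} {q : ℕ → ℕ → U → V → ℝ} {qb : ℕ → ℝ}

theorem RateHyps.qb_nonneg [Nonempty U] [Nonempty V] (hrate : RateHyps q qb) (i : ℕ) :
    0 ≤ qb i := by
  obtain ⟨a, b⟩ := Classical.arbitrary (U × V)
  refine le_trans (tsum_nonneg fun j => ?_) ((hrate.stable i).1 ⟨(a, b), rfl⟩)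
  split_ifs with hj
  exacts [le_rfl, hrate.off_nonneg i j a b hj]

theorem RateHyps.neg_qb_le_self (hrate : RateHyps q qb) (i : ℕ) (a : U) (b : V) :
    -qb i ≤ q i i a b := by
  have hsplit := (hrate.summable i a b).tsum_eq_add_tsum_ite i
  have hout : ∑' j, (if j = i then (0 : ℝ) else q i j a b) ≤ qb i :=
    (hrate.stable i).1 ⟨(a, b), rfl⟩
  linarith [hrate.conservative i a b]

variable {N : ℕ} {w : ℕ → ℕ → ℝ} {c : ℝ} {W : ℕ → ℝ}

theorem A1Hyps.mul_W_eq_sum (hA1 : A1Hyps q qb N w c W) (i j : ℕ) (a : U) (b : V) :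
    q i j a b * W j = ∑ n ∈ Finset.range N, q i j a b * w n j := by
  rw [hA1.W_def j, Finset.mul_sum]

theorem A1Hyps.summable_mul_W (hA1 : A1Hyps q qb N w c W) (i : ℕ) (a : U) (b : V) :
    Summable fun j => q i j a b * W j := by
  simp only [hA1.mul_W_eq_sum i _ a b]
  exact summable_sum fun n hn => hA1.w_summable n (Finset.mem_range.mp hn) i a b

/-- The drift conditions of (A1) telescope:
`∑ⱼ q(j|i) W(j) = ∑ₙ ∑ⱼ q(j|i) wₙ(j) ≤ ∑_{n < N-1} wₙ₊₁(i) ≤ W(i)`. -/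
theorem A1Hyps.tsum_mul_W_le (hA1 : A1Hyps q qb N w c W) (i : ℕ) (a : U) (b : V) :
    ∑' j, q i j a b * W j ≤ W i := by
  obtain ⟨N, rfl⟩ : ∃ N', N = N' + 1 := Nat.exists_eq_add_one.mpr hA1.N_pos
  have hlast := hA1.w_last i a b
  simp only [add_tsub_cancel_right] at hlast
  calc ∑' j, q i j a b * W j = ∑ n ∈ Finset.range (N + 1), ∑' j, q i j a b * w n j := by
        simp only [hA1.mul_W_eq_sum i _ a b]
        exact Summable.tsum_finsetSum fun n hn =>
          hA1.w_summable n (Finset.mem_range.mp hn) i a b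
    _ ≤ ∑ n ∈ Finset.range N, w (n + 1) i + 0 := by
        rw [Finset.sum_range_succ]
        gcongr with n hn
        exact hA1.w_rec n (by simpa using hn) i a b
    _ ≤ W i := by
        rw [hA1.W_def i, Finset.sum_range_succ', add_zero]
        linarith [hA1.w_nonneg 0 i]

theorem A1Hyps.sum_mul_W_le (hA1 : A1Hyps q qb N w c W) (hrate : RateHyps q qb) {i : ℕ}
    {s : Finset ℕ} (hi : i ∈ s) (a : U) (b : V) : ∑ j ∈ s, q i j a b * W j ≤ W i :=
  (Summable.sum_le_tsum s (fun j hj => mul_nonneg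
    (hrate.off_nonneg i j a b (ne_of_mem_of_not_mem hi hj).symm) (hA1.W_pos j).le)
    (hA1.summable_mul_W i a b)).trans (hA1.tsum_mul_W_le i a b)

end Rates

section IntegratedRates

variable {U V : Type} [TopologicalSpace U] [CompactSpace U] [MeasurableSpace U]
  [OpensMeasurableSpace U] [TopologicalSpace V] [FirstCountableTopology V] [CompactSpace V]
  [MeasurableSpace V] [OpensMeasurableSpace V]
  {q : ℕ → ℕ → U → V → ℝ} {qb : ℕ → ℝ} {N : ℕ} {w : ℕ → ℕ → ℝ} {c : ℝ} {W : ℕ → ℝ}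
  {i : ℕ} (μ : ProbabilityMeasure U) (ν : ProbabilityMeasure V)

theorem RateHyps.pT_nonneg [Nonempty U] [Nonempty V] (hrate : RateHyps q qb)
    (hq : Continuous fun ab : U × V => q i i ab.1 ab.2) (j : ℕ) : 0 ≤ pT q qb i j μ ν := by
  have hqb : 0 < qb i + 1 := by linarith [hrate.qb_nonneg i]
  rw [pT]
  split_ifs with hij
  · subst hij
    have hdiag : -qb i ≤ qT q i i μ ν :=
      le_integral_integral_of_le _ _ hq (hrate.neg_qb_le_self i)
    linarith [(le_div_iff₀ hqb).mpr (by linarith : -1 * (qb i + 1) ≤ qT q i i μ ν)]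
  · exact add_nonneg (div_nonneg (integral_nonneg fun b => integral_nonneg fun a =>
      hrate.off_nonneg i j a b (Ne.symm hij)) hqb.le) le_rfl

theorem A1Hyps.sum_qT_mul_W_le (hA1 : A1Hyps q qb N w c W) (hrate : RateHyps q qb)
    (hq : ∀ j, Continuous fun ab : U × V => q i j ab.1 ab.2) {s : Finset ℕ} (hi : i ∈ s) :
    ∑ j ∈ s, qT q i j μ ν * W j ≤ W i := by
  simp only [qT, ← integral_mul_const]
  exact sum_integral_integral_le _ _ s (fun j => (hq j).mul continuous_const)
    (hA1.sum_mul_W_le hrate hi)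

/-- Adding `i` to `s` only increases the sum, and then `∑ q̃(j|i) W(j) ≤ W(i)` by (A1). -/
theorem A1Hyps.sum_pT_mul_W_le [Nonempty U] [Nonempty V] (hA1 : A1Hyps q qb N w c W)
    (hrate : RateHyps q qb) (hq : ∀ j, Continuous fun ab : U × V => q i j ab.1 ab.2)
    (s : Finset ℕ) : ∑ j ∈ s, pT q qb i j μ ν * W j ≤ 2 * W i := by
  have hqb : 1 ≤ qb i + 1 := by linarith [hrate.qb_nonneg i]
  have hW := hA1.W_pos i
  calc ∑ j ∈ s, pT q qb i j μ ν * W j ≤ ∑ j ∈ insert i s, pT q qb i j μ ν * W j :=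
        Finset.sum_le_sum_of_subset_of_nonneg (Finset.subset_insert i s) fun j _ _ =>
          mul_nonneg (hrate.pT_nonneg μ ν (hq i) j) (hA1.W_pos j).le
    _ = (∑ j ∈ insert i s, qT q i j μ ν * W j) / (qb i + 1) + W i := by
        simp [pT, add_mul, Finset.sum_add_distrib, Finset.sum_div, div_mul_eq_mul_div]
    _ ≤ W i / 1 + W i := by
        gcongr
        exact hA1.sum_qT_mul_W_le μ ν hrate hq (Finset.mem_insert_self i s)
    _ = 2 * W i := by ring

theorem A1Hyps.summable_pT_mul_and_tsum_le [Nonempty U] [Nonempty V]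
    (hA1 : A1Hyps q qb N w c W) (hrate : RateHyps q qb)
    (hq : ∀ j, Continuous fun ab : U × V => q i j ab.1 ab.2) {M : ℝ} {φ : ℕ → ℝ}
    (hφ : φ ∈ Set.Icc 0 (M • W)) :
    Summable (fun j => pT q qb i j μ ν * φ j) ∧ ∑' j, pT q qb i j μ ν * φ j ≤ 2 * M * W i := by
  have hM : 0 ≤ M := (mul_nonneg_iff_of_pos_right (hA1.W_pos 0)).mp ((hφ.1 0).trans (hφ.2 0))
  have hp := hrate.pT_nonneg μ ν (hq i)
  have hpW : Summable fun j => pT q qb i j μ ν * W j :=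
    summable_of_sum_le (fun j => mul_nonneg (hp j) (hA1.W_pos j).le)
      (hA1.sum_pT_mul_W_le μ ν hrate hq)
  have hle : ∀ j, pT q qb i j μ ν * φ j ≤ M * (pT q qb i j μ ν * W j) := fun j => by
    nlinarith [hp j, hφ.2 j, show (M • W) j = M * W j from rfl]
  have hsum : Summable (fun j => pT q qb i j μ ν * φ j) :=
    (hpW.mul_left M).of_nonneg_of_le (fun j => mul_nonneg (hp j) (hφ.1 j)) hle
  refine ⟨hsum, ?_⟩
  calc ∑' j, pT q qb i j μ ν * φ j ≤ M * ∑' j, pT q qb i j μ ν * W j := by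
        rw [← tsum_mul_left]
        exact hsum.tsum_le_tsum hle (hpW.mul_left M)
    _ ≤ M * (2 * W i) := by
        gcongr
        exact hpW.tsum_le_of_sum_le (hA1.sum_pT_mul_W_le μ ν hrate hq)
    _ = 2 * M * W i := by ring

end IntegratedRates

theorem iInf_iSup_mono_of_bounded {ι κ : Type*} [Nonempty κ] {f g : ι → κ → ℝ} {a b : ℝ}
    (hfa : ∀ x y, a ≤ f x y) (hfb : ∀ x y, f x y ≤ b) (hgb : ∀ x y, g x y ≤ b)
    (h : ∀ x y, f x y ≤ g x y) : ⨅ x, ⨆ y, f x y ≤ ⨅ x, ⨆ y, g x y :=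
  ciInf_mono ⟨a, Set.forall_mem_range.2 fun x =>
      le_ciSup_of_le ⟨b, Set.forall_mem_range.2 (hfb x)⟩ (Classical.arbitrary κ) (hfa x _)⟩
    fun x => ciSup_mono ⟨b, Set.forall_mem_range.2 (hgb x)⟩ (h x)

theorem Tmap_mem_Icc {U V : Type} [MeasurableSpace U] [MeasurableSpace V]
    {q : ℕ → ℕ → U → V → ℝ} {r : ℕ → U → V → ℝ} {qb : ℕ → ℝ} {α : ℝ} {ψ₁ ψ₂ : ℕ → ℝ}
    (hψ : ψ₂ ≤ ψ₁) (φ : ℕ → ℝ) : Tmap q r qb α ψ₁ ψ₂ φ ∈ Set.Icc ψ₂ ψ₁ :=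
  ⟨fun i => le_min (le_max_right _ _) (hψ i), fun _ => min_le_right _ _⟩

section Operator

variable {U V : Type} [TopologicalSpace U] [CompactSpace U] [MeasurableSpace U]
  [OpensMeasurableSpace U] [TopologicalSpace V] [FirstCountableTopology V] [CompactSpace V]
  [MeasurableSpace V] [OpensMeasurableSpace V]
  {q : ℕ → ℕ → U → V → ℝ} {r : ℕ → U → V → ℝ} {qb : ℕ → ℝ} {N : ℕ} {w : ℕ → ℕ → ℝ} {c : ℝ}
  {W : ℕ → ℝ} {M α : ℝ} {ψ₁ ψ₂ : ℕ → ℝ}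

/-- The quantity inside the inf-sup defining `I_α(i, φ)`. -/
noncomputable def uniformizedPayoff (q : ℕ → ℕ → U → V → ℝ) (r : ℕ → U → V → ℝ) (qb : ℕ → ℝ) (α : ℝ)
    (φ : ℕ → ℝ) (i : ℕ) (μ : ProbabilityMeasure U) (ν : ProbabilityMeasure V) : ℝ :=
  rT r i μ ν / (α + qb i + 1) + ((qb i + 1) / (α + qb i + 1)) * ∑' j, pT q qb i j μ ν * φ j

theorem A2Hyps.rT_le (hA2 : A2Hyps q r W M) (i : ℕ) (μ : ProbabilityMeasure U)
    (ν : ProbabilityMeasure V) : rT r i μ ν ≤ M * W i :=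
  integral_integral_le_of_le _ _ (hA2.r_cont i) (hA2.r_le i)

theorem uniformizedPayoff_mem_Icc [Nonempty U] [Nonempty V] (hrate : RateHyps q qb)
    (hA1 : A1Hyps q qb N w c W) (hA2 : A2Hyps q r W M) (hα : 0 ≤ α) {φ : ℕ → ℝ}
    (hφ : φ ∈ Set.Icc 0 (M • W)) (i : ℕ) (μ : ProbabilityMeasure U) (ν : ProbabilityMeasure V) :
    uniformizedPayoff q r qb α φ i μ ν ∈ Set.Icc 0 (3 * M * W i) := by
  have hqb := hrate.qb_nonneg i
  have hrT : 0 ≤ rT r i μ ν := integral_nonneg fun b => integral_nonneg fun a => hA2.r_nonneg i a b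
  have hp := hrate.pT_nonneg μ ν (hA2.q_cont i i)
  obtain ⟨-, hsum⟩ := hA1.summable_pT_mul_and_tsum_le μ ν hrate (hA2.q_cont i) hφ
  have hsum0 : 0 ≤ ∑' j, pT q qb i j μ ν * φ j := tsum_nonneg fun j => mul_nonneg (hp j) (hφ.1 j)
  have hfac : (qb i + 1) / (α + qb i + 1) ≤ 1 := (div_le_one (by linarith)).2 (by linarith)
  constructor
  · unfold uniformizedPayoff
    positivity
  · calc uniformizedPayoff q r qb α φ i μ ν ≤ rT r i μ ν + 1 * (2 * M * W i) := by
          unfold uniformizedPayoff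
          gcongr
          exact div_le_self hrT (by linarith)
      _ ≤ 3 * M * W i := by linarith [hA2.rT_le i μ ν]

theorem Iop_monotoneOn [Nonempty U] [Nonempty V] (hrate : RateHyps q qb)
    (hA1 : A1Hyps q qb N w c W) (hA2 : A2Hyps q r W M) (hα : 0 ≤ α) (i : ℕ) :
    MonotoneOn (fun φ => Iop q r qb α φ i) (Set.Icc 0 (M • W)) := by
  intro φ hφ φ' hφ' hle
  have : Nonempty (ProbabilityMeasure V) := ⟨⟨Measure.dirac (Classical.arbitrary V), inferInstance⟩⟩
  refine iInf_iSup_mono_of_bounded (f := uniformizedPayoff q r qb α φ i)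
    (fun μ ν => (uniformizedPayoff_mem_Icc hrate hA1 hA2 hα hφ i μ ν).1)
    (fun μ ν => (uniformizedPayoff_mem_Icc hrate hA1 hA2 hα hφ i μ ν).2)
    (fun μ ν => (uniformizedPayoff_mem_Icc hrate hA1 hA2 hα hφ' i μ ν).2) fun μ ν => ?_
  obtain ⟨hs, -⟩ := hA1.summable_pT_mul_and_tsum_le μ ν hrate (hA2.q_cont i) hφ
  obtain ⟨hs', -⟩ := hA1.summable_pT_mul_and_tsum_le μ ν hrate (hA2.q_cont i) hφ'
  have hqb := hrate.qb_nonneg i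
  unfold uniformizedPayoff
  gcongr _ + _ * ?_
  exact hs.tsum_le_tsum (fun j => mul_le_mul_of_nonneg_left (hle j)
    (hrate.pT_nonneg μ ν (hA2.q_cont i i) j)) hs'

theorem Tmap_monotoneOn [Nonempty U] [Nonempty V] (hrate : RateHyps q qb)
    (hA1 : A1Hyps q qb N w c W) (hA2 : A2Hyps q r W M) (hα : 0 ≤ α) :
    MonotoneOn (Tmap q r qb α ψ₁ ψ₂) (Set.Icc 0 (M • W)) := fun _ hφ _ hφ' hle i =>
  min_le_min_right _ (max_le_max_right _ (Iop_monotoneOn hrate hA1 hA2 hα i hφ hφ' hle))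

end Operator

theorem Set.MapsTo.mem_of_succ_eq {α : Type*} {f : α → α} {s : Set α} (hs : Set.MapsTo f s s)
    {u : ℕ → α} (hu : ∀ n, u (n + 1) = f (u n)) (h0 : u 0 ∈ s) (n : ℕ) : u n ∈ s := by
  induction n with
  | zero => exact h0
  | succ n ih => exact hu n ▸ hs ih

theorem MonotoneOn.monotone_of_succ_eq {α : Type*} [Preorder α] {f : α → α} {s : Set α}
    (hf : MonotoneOn f s) (hs : Set.MapsTo f s s) {u : ℕ → α} (hu : ∀ n, u (n + 1) = f (u n))
    (h0 : u 0 ∈ s) (h01 : u 0 ≤ u 1) : Monotone u := by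
  refine monotone_nat_of_le_succ fun n => ?_
  induction n with
  | zero => exact h01
  | succ n ih =>
    rw [hu n, hu (n + 1)]
    exact hf (hs.mem_of_succ_eq hu h0 n) (hs.mem_of_succ_eq hu h0 (n + 1)) ih

theorem exists_tendsto_of_monotone_of_mem_Icc {α : Type*} [ConditionallyCompleteLattice α]
    [TopologicalSpace α] [SupConvergenceClass α] [OrderClosedTopology α] {u : ℕ → α} {a b : α}
    (hu : Monotone u) (hab : ∀ n, u n ∈ Set.Icc a b) :
    ∃ l ∈ Set.Icc a b, Tendsto u atTop (𝓝 l) :=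
  have hlim := tendsto_atTop_ciSup hu ⟨b, Set.forall_mem_range.2 fun n => (hab n).2⟩
  ⟨_, isClosed_Icc.mem_of_tendsto hlim (.of_forall hab), hlim⟩

theorem mem_BW_of_mem_Icc {W f : ℕ → ℝ} {M : ℝ} (hW : ∀ i, 0 < W i)
    (hf : f ∈ Set.Icc 0 (M • W)) : f ∈ BW W :=
  ⟨hf.1, M, Set.forall_mem_range.2 fun i => (div_le_iff₀ (hW i)).2 (hf.2 i)⟩

theorem normW_le_of_le {W f : ℕ → ℝ} {M : ℝ} (hW : ∀ i, 0 < W i) (hf : f ≤ M • W) :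
    normW W f ≤ M :=
  ciSup_le fun i => (div_le_iff₀ (hW i)).2 (hf i)

/-- Proposition 2: the iterates `u_0 = ψ₂`, `u_n = T u_(n-1)` converge pointwise to a
limit `u* ∈ B_W(S)` with `ψ₂ ≤ u* ≤ ψ₁` and `‖u*‖_W ≤ M`. -/
theorem stmt14 {U V : Type} [MetricSpace U] [CompactSpace U] [Nonempty U]
    [MeasurableSpace U] [BorelSpace U]
    [MetricSpace V] [CompactSpace V] [Nonempty V]
    [MeasurableSpace V] [BorelSpace V]
    (q : ℕ → ℕ → U → V → ℝ) (r : ℕ → U → V → ℝ) (qb : ℕ → ℝ)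
    (N : ℕ) (w : ℕ → ℕ → ℝ) (c : ℝ) (W : ℕ → ℝ) (M : ℝ) (α : ℝ) (ψ₁ ψ₂ : ℕ → ℝ)
    (hrate : RateHyps q qb) (hA1 : A1Hyps q qb N w c W)
    (hA2 : A2Hyps q r W M) (hψ : PsiHyps ψ₁ ψ₂ W M) (hα : 0 < α) :
    ∀ u : ℕ → ℕ → ℝ, u 0 = ψ₂ → (∀ n, u (n + 1) = Tmap q r qb α ψ₁ ψ₂ (u n)) →
      ∃ ustar : ℕ → ℝ,
        (∀ i, Tendsto (fun n => u n i) atTop (𝓝 (ustar i))) ∧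
        ustar ∈ BW W ∧
        (∀ i, ψ₂ i ≤ ustar i ∧ ustar i ≤ ψ₁ i) ∧
        normW W ustar ≤ M := by
  intro u hu0 hrec
  have hψle : ψ₂ ≤ ψ₁ := fun i => (hψ.ψ₂_lt_ψ₁ i).le
  have hsub : Set.Icc ψ₂ ψ₁ ⊆ Set.Icc 0 (M • W) := fun φ hφ =>
    ⟨fun i => (hψ.ψ₂_nonneg i).trans (hφ.1 i), fun i => (hφ.2 i).trans (hψ.ψ₁_le i)⟩
  have hmaps : Set.MapsTo (Tmap q r qb α ψ₁ ψ₂) (Set.Icc ψ₂ ψ₁) (Set.Icc ψ₂ ψ₁) :=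
    fun φ _ => Tmap_mem_Icc hψle φ
  have hu0mem : u 0 ∈ Set.Icc ψ₂ ψ₁ := by simpa [hu0] using hψle
  have hmem := hmaps.mem_of_succ_eq hrec hu0mem
  have hmono : Monotone u := ((Tmap_monotoneOn hrate hA1 hA2 hα.le).mono hsub).monotone_of_succ_eq
    hmaps hrec hu0mem (hu0 ▸ (hmem 1).1)
  obtain ⟨ustar, hstar, hlim⟩ := exists_tendsto_of_monotone_of_mem_Icc hmono hmem
  exact ⟨ustar, tendsto_pi_nhds.1 hlim, mem_BW_of_mem_Icc hA1.W_pos (hsub hstar),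
    fun i => ⟨hstar.1 i, hstar.2 i⟩, normW_le_of_le hA1.W_pos (hsub hstar).2⟩
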